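/- Let G=(V0,V1,E,Ω) be a Müller game and let W∈Ω be such that the connectivity game on the arena of G(W) is forced-connected and W is not a 1-trap in G. Let G_W be Horn's construction for W, with new player-1 vertex 𝐖. Then Win_0(G_W)\{𝐖} ⊆ Win_0(G). -/

import Mathlib

namespace Games

universe u

variable {V : Type u}

/-- A Müller game: player 0's positions `V0`, player 1's positions `V1`, the edge set
`E` and the collection `Omega` of winning sets. -/
structure MullerGame (V : Type u) where
  V0 : Set V
  V1 : Set V
  E : Set (V × V)
  Omega : Set (Set V)

namespace MullerGame

/-- The vertex set `V = V0 ∪ V1`. -/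
def verts (G : MullerGame V) : Set V := G.V0 ∪ G.V1

/-- Player `σ`'s positions (`false` is player 0, `true` is player 1). -/
def pos (G : MullerGame V) (σ : Bool) : Set V := cond σ G.V1 G.V0

/-- The subgame `G(S)` on the vertex set `S`, with edges `E ∩ (S × S)` and winning
sets `Ω ∩ 2^S`. -/
def subgame (G : MullerGame V) (S : Set V) : MullerGame V :=
  ⟨G.V0 ∩ S, G.V1 ∩ S, {e | e ∈ G.E ∧ e.1 ∈ S ∧ e.2 ∈ S}, {W | W ∈ G.Omega ∧ W ⊆ S}⟩

end MullerGame

/-- Finite plays (histories) consistent with player `σ`'s strategy `s`, starting at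
`v0`: at a position of player `σ` the strategy's (legal) move is played, at a position
of the opponent any legal move may be played. -/
inductive HistM (G : MullerGame V) (σ : Bool) (s : List V → V) (v0 : V) : List V → Prop
  | base : HistM G σ s v0 [v0]
  | moveOwn (h : List V) (v : V) (hh : HistM G σ s v0 (h ++ [v])) (hv : v ∈ G.pos σ)
      (he : (v, s (h ++ [v])) ∈ G.E) : HistM G σ s v0 ((h ++ [v]) ++ [s (h ++ [v])])
  | moveOpp (h : List V) (v u : V) (hh : HistM G σ s v0 (h ++ [v])) (hv : v ∈ G.pos (!σ))
      (he : (v, u) ∈ G.E) : HistM G σ s v0 ((h ++ [v]) ++ [u])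

/-- The prefix `ρ 0, …, ρ n` of an infinite sequence. -/
def prefixUpTo (ρ : ℕ → V) (n : ℕ) : List V := List.ofFn fun i : Fin (n + 1) => ρ i

/-- The set `Inf(ρ)` of vertices visited infinitely often by `ρ`. -/
def InfSet (ρ : ℕ → V) : Set V := {v | ∀ N, ∃ n, N ≤ n ∧ ρ n = v}

/-- `ρ` is an infinite play consistent with player `σ`'s strategy `s` from `v0`. -/
def InfPlayM (G : MullerGame V) (σ : Bool) (s : List V → V) (v0 : V) (ρ : ℕ → V) : Prop :=
  ∀ n, HistM G σ s v0 (prefixUpTo ρ n)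

/-- `s` is a winning strategy for player `σ` from `v0` in the Müller game `G`.
In all cases `σ`'s moves must be legal whenever a move is available. Player 0 must in
addition never get stuck (finite maximal plays are wins for player 1) and every
infinite consistent play `ρ` must satisfy `Inf(ρ) ∈ Ω`; for player 1 every infinite
consistent play `ρ` must satisfy `Inf(ρ) ∉ Ω`. -/
def WinsFrom (G : MullerGame V) (σ : Bool) (s : List V → V) (v0 : V) : Prop :=
  (∀ h v, HistM G σ s v0 (h ++ [v]) → v ∈ G.pos σ → (∃ u, (v, u) ∈ G.E) →
      (v, s (h ++ [v])) ∈ G.E) ∧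
    (if σ = true then
      ∀ ρ : ℕ → V, InfPlayM G σ s v0 ρ → InfSet ρ ∉ G.Omega
    else
      (∀ h v, HistM G σ s v0 (h ++ [v]) → ∃ u, (v, u) ∈ G.E) ∧
        ∀ ρ : ℕ → V, InfPlayM G σ s v0 ρ → InfSet ρ ∈ G.Omega)

/-- `Win_σ(G)`: the set of vertices from which player `σ` has a winning strategy. -/
def WinSet (G : MullerGame V) (σ : Bool) : Set V :=
  {v | v ∈ G.verts ∧ ∃ s : List V → V, WinsFrom G σ s v}

/-- Player `σ` wins `G`, i.e. has a winning strategy from every vertex. -/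
def WinsEverywhere (G : MullerGame V) (σ : Bool) : Prop :=
  ∀ v ∈ G.verts, ∃ s : List V → V, WinsFrom G σ s v

/-- `S` determines a subgame of `G`. -/
def DeterminesSubgame (G : MullerGame V) (S : Set V) : Prop :=
  S.Nonempty ∧ S ⊆ G.verts ∧ ∀ v ∈ S, ∃ u ∈ S, (v, u) ∈ G.E

/-- `S` is a `σ`-trap in `G`: it determines a subgame and player `σ` cannot leave it. -/
def IsTrap (G : MullerGame V) (σ : Bool) (S : Set V) : Prop :=
  DeterminesSubgame G S ∧ ∀ v ∈ S ∩ G.pos σ, ∀ u, (v, u) ∈ G.E → u ∈ S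

/-- Membership in the `σ`-attractor of `X` inside the game restricted to `Y`. -/
inductive InAttr (G : MullerGame V) (σ : Bool) (X Y : Set V) : V → Prop
  | base (v : V) (hY : v ∈ Y) (hX : v ∈ X) : InAttr G σ X Y v
  | own (v u : V) (hY : v ∈ Y) (hp : v ∈ G.pos σ) (he : (v, u) ∈ G.E) (huY : u ∈ Y)
      (hu : InAttr G σ X Y u) : InAttr G σ X Y v
  | opp (v : V) (hY : v ∈ Y) (hp : v ∈ G.pos (!σ)) (hne : ∃ u ∈ Y, (v, u) ∈ G.E)
      (hall : ∀ u, (v, u) ∈ G.E → u ∈ Y → InAttr G σ X Y u) : InAttr G σ X Y v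

/-- `Attr_σ(X, G(Y))`: the set of vertices of `Y` from which player `σ` can force the
token into `X` within `Y`. -/
def Attr (G : MullerGame V) (σ : Bool) (X Y : Set V) : Set V := {v | InAttr G σ X Y v}

/-- The connectivity game played on the arena of `G` restricted to `S`: player 0 wins
an infinite play iff the set of vertices visited infinitely often is the whole vertex
set of the restricted arena. -/
def connGameOn (G : MullerGame V) (S : Set V) : MullerGame V :=
  ⟨G.V0 ∩ S, G.V1 ∩ S, {e | e ∈ G.E ∧ e.1 ∈ S ∧ e.2 ∈ S},
    {(G.V0 ∩ S) ∪ (G.V1 ∩ S)}⟩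

/-- The arena of `G(S)` is forced-connected: player 0 wins the connectivity game on it
from every vertex. -/
def ForcedConnectedOn (G : MullerGame V) (S : Set V) : Prop :=
  WinsEverywhere (connGameOn G S) false

/-- Horn's construction `G_W`, with the fresh player-1 vertex `w` playing the role
of `𝐖`. -/
def horn (G : MullerGame V) (W : Set V) (w : V) : MullerGame V where
  V0 := G.V0
  V1 := G.V1 ∪ {w}
  E := G.E ∪ (G.V0 ∩ W) ×ˢ ({w} : Set V) ∪
    ({w} : Set V) ×ˢ ({u | ∃ v ∈ G.V1 ∩ W, (v, u) ∈ G.E} \ W)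
  Omega := (G.Omega ∪ {S | ∃ W' ∈ G.Omega, W ⊂ W' ∧ S = W' ∪ {w}}) \
    ({W' | W' ∈ G.Omega ∧ W ⊂ W'} ∪ {W})


/-!
Player 0 plays in `G` by simulating a winning strategy `s` of `G_W`. Whenever `s` would
move from a vertex `a ∈ V0 ∩ W` to `𝐖`, player 0 instead starts a *phase*: he follows a
winning strategy of the connectivity game on `G(W)` from `a` for as long as the play stays
in `W`. If player 1 leaves `W` by a move `v → u` with `v ∈ V1 ∩ W`, the simulated play
records it as player 1's move `𝐖 → u` of `G_W`.

A play that eventually stays in one phase visits exactly `W ∈ Ω` infinitely often.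
Otherwise the simulated `G_W`-histories grow without bound and converge to a play
consistent with `s`. If that play visits `𝐖` finitely often, it eventually coincides with
the real play up to a shift. If it visits `𝐖` infinitely often, its `Inf` is `W' ∪ {𝐖}`
with `W ⊊ W' ∈ Ω`; vertices outside `W` occur as often in both plays and `W ⊆ W'`, so the
real play visits exactly `W'` infinitely often.
-/

section Plays

variable {G : MullerGame V} {σ : Bool} {s : List V → V} {v0 : V} {l : List V}

theorem HistM.ne_nil (hl : HistM G σ s v0 l) : l ≠ [] := by
  cases hl <;> simp

theorem HistM.snoc {v u : V} (hl : HistM G σ s v0 l) (hv : l.getLast? = some v)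
    (he : (v, u) ∈ G.E) (hmove : (v ∈ G.pos σ ∧ u = s l) ∨ v ∈ G.pos (!σ)) :
    HistM G σ s v0 (l ++ [u]) := by
  obtain ⟨l, rfl⟩ := List.getLast?_eq_some_iff.mp hv
  rcases hmove with ⟨hvσ, rfl⟩ | hvσ
  exacts [.moveOwn l v hl hvσ he, .moveOpp l v u hl hvσ he]

theorem HistM.induction_snoc {P : List V → Prop} (base : P [v0])
    (step : ∀ l v u, HistM G σ s v0 l → l.getLast? = some v → P l → (v, u) ∈ G.E →
      (v ∈ G.pos σ ∧ u = s l) ∨ v ∈ G.pos (!σ) → P (l ++ [u]))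
    (hl : HistM G σ s v0 l) : P l := by
  induction hl with
  | base => exact base
  | moveOwn h v hh hv he ih => exact step _ v _ hh (by simp) ih he (Or.inl ⟨hv, rfl⟩)
  | moveOpp h v u hh hv he ih => exact step _ v u hh (by simp) ih he (Or.inr hv)

theorem HistM.take_succ (hl : HistM G σ s v0 l) (j : ℕ) :
    HistM G σ s v0 (l.take (j + 1)) := by
  refine hl.induction_snoc (P := fun l => ∀ j, HistM G σ s v0 (l.take (j + 1)))
    (fun j => by simpa using HistM.base) ?_ j
  intro l v u hl hv ih he hmove j
  rcases le_or_gt (j + 1) l.length with hj | hj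
  · rw [List.take_append_of_le_length hj]
    exact ih j
  · rw [List.take_of_length_le (by simp; omega)]
    exact hl.snoc hv he hmove

theorem HistM.forall_mem {S : Set V} (hv0 : v0 ∈ S) (hE : ∀ e ∈ G.E, e.2 ∈ S)
    (hl : HistM G σ s v0 l) : ∀ x ∈ l, x ∈ S := by
  refine hl.induction_snoc (P := fun l => ∀ x ∈ l, x ∈ S) (by simpa using hv0) ?_
  intro l v u _ _ ih he _ x hx
  rcases List.mem_append.mp hx with hx | hx
  · exact ih x hx
  · obtain rfl := List.mem_singleton.mp hx
    exact hE (v, x) he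

theorem HistM.forall_mem_connGameOn {W : Set V} {t : List V → V} {a : V} (ha : a ∈ W)
    (hl : HistM (connGameOn G W) σ t a l) : ∀ x ∈ l, x ∈ W :=
  hl.forall_mem ha (by rintro _ ⟨-, -, h⟩; exact h)

theorem WinsFrom.exists_edge (hs : WinsFrom G false s v0) (hl : HistM G false s v0 l)
    {v : V} (hv : l.getLast? = some v) : ∃ u, (v, u) ∈ G.E := by
  obtain ⟨l, rfl⟩ := List.getLast?_eq_some_iff.mp hv
  exact hs.2.1 l v hl

theorem WinsFrom.move_mem_E (hs : WinsFrom G false s v0) (hl : HistM G false s v0 l)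
    {v : V} (hv : l.getLast? = some v) (hvV0 : v ∈ G.V0) : (v, s l) ∈ G.E := by
  have hedge := hs.exists_edge hl hv
  obtain ⟨l, rfl⟩ := List.getLast?_eq_some_iff.mp hv
  exact hs.1 l v hl hvV0 hedge

theorem WinsFrom.infSet_mem (hs : WinsFrom G false s v0) {ρ : ℕ → V}
    (hρ : InfPlayM G false s v0 ρ) : InfSet ρ ∈ G.Omega :=
  hs.2.2 ρ hρ

end Plays

section Sequences

variable {ρ : ℕ → V} {l : List V} {n k : ℕ}

@[simp]
theorem length_prefixUpTo : (prefixUpTo ρ n).length = n + 1 := by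
  simp [prefixUpTo]

@[simp]
theorem getElem_prefixUpTo {i : ℕ} (hi : i < (prefixUpTo ρ n).length) :
    (prefixUpTo ρ n)[i] = ρ i := by
  simp only [prefixUpTo, List.getElem_ofFn]

theorem prefixUpTo_succ : prefixUpTo ρ (n + 1) = prefixUpTo ρ n ++ [ρ (n + 1)] := by
  unfold prefixUpTo
  rw [List.ofFn_succ']
  simp [Fin.castSucc]

theorem getLast?_prefixUpTo : (prefixUpTo ρ n).getLast? = some (ρ n) := by
  simp [List.getLast?_eq_getElem?]

theorem prefixUpTo_eq_take (hρl : ∀ i (hi : i < l.length), ρ i = l[i]) (hk : k < l.length) :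
    prefixUpTo ρ k = l.take (k + 1) :=
  List.ext_getElem (by simp; omega) fun i _ hi => by
    simpa using hρl i (lt_of_lt_of_le hi (by simp))

theorem isPrefix_prefixUpTo (hρl : ∀ i (hi : i < l.length), ρ i = l[i]) :
    l <+: prefixUpTo ρ l.length :=
  List.prefix_iff_getElem.mpr ⟨by simp, fun i hi => by simp [hρl i hi]⟩

theorem drop_prefixUpTo (hk : k ≤ n) :
    (prefixUpTo ρ n).drop k = prefixUpTo (fun j => ρ (k + j)) (n - k) :=
  List.ext_getElem (by simp; omega) fun i _ _ => by simp

theorem InfPlayM.of_forall_exists_le {G : MullerGame V} {σ : Bool} {s : List V → V} {v0 : V}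
    (h : ∀ j, ∃ n, j ≤ n ∧ HistM G σ s v0 (prefixUpTo ρ n)) : InfPlayM G σ s v0 ρ := by
  intro j
  obtain ⟨n, hjn, hn⟩ := h j
  rw [prefixUpTo_eq_take (l := prefixUpTo ρ n) (fun i hi => by simp) (by simp; omega)]
  exact hn.take_succ j

theorem infSet_shift (ρ : ℕ → V) (m : ℕ) : InfSet (fun j => ρ (m + j)) = InfSet ρ := by
  ext v
  constructor
  · intro hv N
    obtain ⟨n, hn, he⟩ := hv N
    exact ⟨m + n, by omega, he⟩
  · intro hv N
    obtain ⟨n, hn, he⟩ := hv (m + N)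
    exact ⟨n - m, by omega, by simpa [show m + (n - m) = n by omega] using he⟩

theorem mem_infSet_iff_count [DecidableEq V] {v : V} :
    v ∈ InfSet ρ ↔ ∀ m, ∃ n, m ≤ (prefixUpTo ρ n).count v := by
  have hcount : ∀ n, (prefixUpTo ρ n).count v = Nat.count (ρ · = v) (n + 1) := by
    intro n
    induction n with
    | zero => simp [prefixUpTo, Nat.count_succ, List.count_singleton]
    | succ n ih =>
      rw [prefixUpTo_succ, List.count_append, ih, Nat.count_succ _ (n + 1)]
      simp [List.count_singleton]
  have hinf : v ∈ InfSet ρ ↔ {i | ρ i = v}.Infinite := by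
    rw [← Nat.frequently_atTop_iff_infinite, Filter.frequently_atTop]
    rfl
  simp_rw [hcount, hinf]
  refine ⟨fun h m => ⟨Nat.nth (ρ · = v) m, ?_⟩, fun h => ?_⟩
  · exact (Nat.count_nth_of_infinite h m).ge.trans (Nat.count_monotone _ (Nat.le_succ _))
  · by_contra hfin
    rw [Set.not_infinite] at hfin
    obtain ⟨n, hn⟩ := h (hfin.toFinset.card + 1)
    have := Nat.count_le_card hfin (n + 1)
    omega

end Sequences

section Limits

def IsListLimit (ρ : ℕ → V) (L : ℕ → List V) : Prop :=
  (∀ n i (hi : i < (L n).length), ρ i = (L n)[i]) ∧ ∀ k, ∃ n, k < (L n).length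

variable {ρ : ℕ → V} {L : ℕ → List V}

theorem exists_isListLimit (hL : ∀ n, L n <+: L (n + 1))
    (hunb : ∀ k, ∃ n, k < (L n).length) : ∃ ρ, IsListLimit ρ L := by
  choose N hN using hunb
  have hmono : ∀ {m n}, m ≤ n → L m <+: L n := fun hmn =>
    Nat.le_induction (List.prefix_refl _) (fun n _ ih => ih.trans (hL n)) _ hmn
  refine ⟨fun i => (L (N i))[i]'(hN i), fun n i hi => ?_, fun k => ⟨N k, hN k⟩⟩
  rcases le_total n (N i) with h | h
  · exact ((hmono h).getElem hi).symm
  · exact (hmono h).getElem (hN i)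

theorem IsListLimit.infPlayM {G : MullerGame V} {σ : Bool} {s : List V → V} {v0 : V}
    (hρ : IsListLimit ρ L) (hL : ∀ n, HistM G σ s v0 (L n)) : InfPlayM G σ s v0 ρ := by
  intro k
  obtain ⟨n, hn⟩ := hρ.2 k
  rw [prefixUpTo_eq_take (hρ.1 n) hn]
  exact (hL n).take_succ k

theorem IsListLimit.mem_infSet_iff_count [DecidableEq V] (hρ : IsListLimit ρ L) {v : V} :
    v ∈ InfSet ρ ↔ ∀ m, ∃ n, m ≤ (L n).count v := by
  rw [Games.mem_infSet_iff_count]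
  refine forall_congr' fun m => ⟨fun ⟨k, hk⟩ => ?_, fun ⟨n, hn⟩ => ?_⟩
  · obtain ⟨n, hn⟩ := hρ.2 k
    rw [prefixUpTo_eq_take (hρ.1 n) hn] at hk
    exact ⟨n, hk.trans ((List.take_prefix _ _).count_le v)⟩
  · exact ⟨_, hn.trans ((isPrefix_prefixUpTo (hρ.1 n)).count_le v)⟩

theorem IsListLimit.apply_length_sub_one (hρ : IsListLimit ρ L) {n : ℕ} {x : V}
    (h : (L n).getLast? = some x) : ρ ((L n).length - 1) = x := by
  rw [List.getLast?_eq_getElem?] at h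
  obtain ⟨hi, hx⟩ := List.getElem?_eq_some_iff.mp h
  rw [hρ.1 n _ hi, hx]

end Limits

section HornGame

variable {G : MullerGame V} {W : Set V} {w : V}

theorem mem_omega_of_mem_horn_omega {S : Set V} (hS : S ∈ (horn G W w).Omega) (hwS : w ∉ S) :
    S ∈ G.Omega := by
  obtain ⟨hS | ⟨W', -, -, rfl⟩, -⟩ := hS
  · exact hS
  · exact absurd (Or.inr rfl) hwS

theorem exists_eq_union_of_mem_horn_omega (hOm : ∀ W' ∈ G.Omega, W' ⊆ G.verts)
    (hw : w ∉ G.verts) {S : Set V} (hS : S ∈ (horn G W w).Omega) (hwS : w ∈ S) :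
    ∃ W' ∈ G.Omega, W ⊆ W' ∧ S = W' ∪ {w} := by
  obtain ⟨hS | ⟨W', hW', hWW', rfl⟩, -⟩ := hS
  · exact absurd (hOm S hS hwS) hw
  · exact ⟨W', hW', hWW'.subset, rfl⟩

theorem ForcedConnectedOn.exists_strategy (hfc : ForcedConnectedOn G W) (hWV : W ⊆ G.verts) :
    ∃ sc : V → List V → V, ∀ a ∈ W, WinsFrom (connGameOn G W) false (sc a) a := by
  have hwin (a : V) (ha : a ∈ W) : ∃ t, WinsFrom (connGameOn G W) false t a :=
    hfc a ((hWV ha).imp (⟨·, ha⟩) (⟨·, ha⟩))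
  classical
  exact ⟨fun a => if ha : a ∈ W then (hwin a ha).choose else fun _ => a,
    fun a ha => by simpa [ha] using (hwin a ha).choose_spec⟩

end HornGame

section Simulation

/-- The state of the simulation of a `G_W`-strategy inside `G`. A state `(sh, none)` means
the play is outside a phase and `sh` is the simulated `G_W`-history; a state
`(sh, some (a, k))` means a phase began at vertex `a`, at index `k` of the real history,
and `sh` ends with `𝐖`. -/
abbrev HornState (V : Type u) := List V × Option (V × ℕ)

variable (G : MullerGame V) (W : Set V) (w : V) (s : List V → V)

noncomputable def hornStep : HornState V → V → ℕ → HornState V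
  | (sh, none), u, k =>
    open Classical in
    if u ∈ G.V0 ∧ u ∈ W ∧ s (sh ++ [u]) = w then (sh ++ [u] ++ [w], some (u, k))
    else (sh ++ [u], none)
  | (sh, some p), u, _ =>
    open Classical in
    if u ∈ W then (sh, some p) else (sh ++ [u], none)

noncomputable def hornSimRev : List V → HornState V
  | [] => ([], none)
  | u :: r => hornStep G W w s (hornSimRev r) u r.length

noncomputable def hornSim (h : List V) : HornState V :=
  hornSimRev G W w s h.reverse

variable {G W w s}

theorem hornSim_nil : hornSim G W w s [] = ([], none) := rfl

theorem hornSim_append_singleton (h : List V) (u : V) :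
    hornSim G W w s (h ++ [u]) = hornStep G W w s (hornSim G W w s h) u h.length := by
  simp [hornSim, hornSimRev]

variable {st : HornState V} {u : V} {k : ℕ}

theorem hornStep_fst_isPrefix : st.1 <+: (hornStep G W w s st u k).1 := by
  rcases st with ⟨sh, _ | p⟩ <;> simp only [hornStep] <;> split_ifs <;> simp

theorem length_hornStep_fst (hst : st.2 = none) :
    st.1.length < (hornStep G W w s st u k).1.length := by
  rcases st with ⟨sh, _ | p⟩ <;> simp only [hornStep] at hst ⊢ <;> split_ifs <;> simp_all

theorem hornStep_eq_or_snd_eq_none (hst : st.2 ≠ none) :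
    hornStep G W w s st u k = st ∨ (hornStep G W w s st u k).2 = none := by
  rcases st with ⟨sh, _ | p⟩ <;> simp only [hornStep] at hst ⊢ <;> split_ifs <;> simp_all

theorem hornStep_fst_of_snd_eq_none (hst : st.2 = none)
    (h : (hornStep G W w s st u k).2 = none) : (hornStep G W w s st u k).1 = st.1 ++ [u] := by
  rcases st with ⟨sh, _ | p⟩ <;> simp only [hornStep] at hst h ⊢ <;> split_ifs at h ⊢ <;>
    simp_all

theorem getLast?_hornStep_fst (h : (hornStep G W w s st u k).2 = none) :
    (hornStep G W w s st u k).1.getLast? = some u := by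
  rcases st with ⟨sh, _ | p⟩ <;> simp only [hornStep] at h ⊢ <;> split_ifs at h ⊢ <;>
    simp_all

theorem hornStep_eq_some {sh : List V} {a : V} {k' : ℕ}
    (h : hornStep G W w s st u k = (sh, some (a, k'))) :
    (st.2 = none ∧ u ∈ W ∧ a = u ∧ k' = k) ∨ (u ∈ W ∧ st = (sh, some (a, k'))) := by
  rcases st with ⟨sh, _ | p⟩ <;> simp only [hornStep] at h ⊢ <;> split_ifs at h <;> simp_all

theorem getLast?_of_hornSim_eq_none {h sh : List V} (hh : hornSim G W w s h = (sh, none)) :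
    sh.getLast? = h.getLast? := by
  rcases h.eq_nil_or_concat with rfl | ⟨h, u, rfl⟩
  · cases hh
    rfl
  · rw [List.concat_eq_append, hornSim_append_singleton] at hh
    simpa [hh] using getLast?_hornStep_fst (congrArg Prod.snd hh)

theorem getLast?_of_hornSim_eq_some {h sh : List V} {p : V × ℕ}
    (hh : hornSim G W w s h = (sh, some p)) : sh.getLast? = some w := by
  induction h using List.reverseRecOn generalizing sh p with
  | nil => cases hh
  | append_singleton h u ih =>
    rw [hornSim_append_singleton] at hh
    rcases hst : hornSim G W w s h with ⟨sh', _ | p'⟩ <;> rw [hst] at hh <;>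
      simp only [hornStep] at hh <;> split_ifs at hh <;> cases hh <;> simp_all

theorem apply_ne_of_hornSim_eq_none {h sh : List V} {v : V}
    (hh : hornSim G W w s h = (sh, none)) (hv : h.getLast? = some v) (hvV0 : v ∈ G.V0)
    (hvW : v ∈ W) : s sh ≠ w := by
  obtain ⟨h, rfl⟩ := List.getLast?_eq_some_iff.mp hv
  rw [hornSim_append_singleton] at hh
  rcases hst : hornSim G W w s h with ⟨sh', _ | p⟩ <;> rw [hst] at hh <;>
    simp only [hornStep] at hh <;> split_ifs at hh <;> simp_all

theorem count_hornSim_fst_le [DecidableEq V] {v : V} (hv : v ≠ w) (h : List V) :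
    (hornSim G W w s h).1.count v ≤ h.count v := by
  induction h using List.reverseRecOn with
  | nil => simp [hornSim_nil]
  | append_singleton h u ih =>
    rw [hornSim_append_singleton]
    rcases hst : hornSim G W w s h with ⟨sh, _ | p⟩ <;> rw [hst] at ih <;>
      simp only [hornStep] <;> split_ifs <;>
      simp only [List.count_append, List.count_singleton, beq_iff_eq, hv.symm, ↓reduceIte]
        at ih ⊢ <;> omega

theorem count_le_count_hornSim_fst [DecidableEq V] {v : V} (hvW : v ∉ W) (h : List V) :
    h.count v ≤ (hornSim G W w s h).1.count v := by
  induction h using List.reverseRecOn with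
  | nil => simp [hornSim_nil]
  | append_singleton h u ih =>
    rw [hornSim_append_singleton]
    rcases hst : hornSim G W w s h with ⟨sh, _ | p⟩ <;> rw [hst] at ih <;>
      simp only [hornStep] <;> split_ifs <;>
      simp only [List.count_append, List.count_singleton, beq_iff_eq] at ih ⊢ <;> grind

end Simulation

section Along

variable {G : MullerGame V} {W : Set V} {w : V} {s : List V → V} {ρ ρ' : ℕ → V} {n N : ℕ}

variable (G W w s) in
noncomputable def hornSimSeq (ρ : ℕ → V) (n : ℕ) : HornState V :=
  hornSim G W w s (prefixUpTo ρ n)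

theorem hornSimSeq_succ :
    hornSimSeq G W w s ρ (n + 1) =
      hornStep G W w s (hornSimSeq G W w s ρ n) (ρ (n + 1)) (n + 1) := by
  rw [hornSimSeq, prefixUpTo_succ, hornSim_append_singleton, length_prefixUpTo]
  rfl

theorem hornSimSeq_fst_isPrefix {m : ℕ} (hmn : m ≤ n) :
    (hornSimSeq G W w s ρ m).1 <+: (hornSimSeq G W w s ρ n).1 := by
  induction n, hmn using Nat.le_induction with
  | base => exact List.prefix_refl _
  | succ n _ ih => exact ih.trans (hornSimSeq_succ ▸ hornStep_fst_isPrefix)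

theorem length_hornSimSeq_lt_succ (hn : (hornSimSeq G W w s ρ n).2 = none) :
    (hornSimSeq G W w s ρ n).1.length < (hornSimSeq G W w s ρ (n + 1)).1.length := by
  rw [hornSimSeq_succ]
  exact length_hornStep_fst hn

theorem exists_lt_length_hornSimSeq
    (hout : ∀ N, ∃ n, N ≤ n ∧ (hornSimSeq G W w s ρ n).2 = none) (k : ℕ) :
    ∃ n, k < (hornSimSeq G W w s ρ n).1.length := by
  induction k with
  | zero =>
    obtain ⟨n, -, hn⟩ := hout 0
    exact ⟨n + 1, (Nat.zero_le _).trans_lt (length_hornSimSeq_lt_succ hn)⟩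
  | succ k ih =>
    obtain ⟨n, hn⟩ := ih
    obtain ⟨n', hnn', hn'⟩ := hout n
    have hkn' := hn.trans_le (hornSimSeq_fst_isPrefix hnn').length_le
    exact ⟨n' + 1, (Nat.succ_le_of_lt hkn').trans_lt (length_hornSimSeq_lt_succ hn')⟩

theorem infSet_eq_of_eventually_eq_none
    (hρ' : IsListLimit ρ' fun n => (hornSimSeq G W w s ρ n).1)
    (hN : ∀ n, N ≤ n → (hornSimSeq G W w s ρ n).2 = none) : InfSet ρ = InfSet ρ' := by
  have hlen (j : ℕ) : (hornSimSeq G W w s ρ (N + j)).1.length =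
      (hornSimSeq G W w s ρ N).1.length + j := by
    induction j with
    | zero => rfl
    | succ j ih =>
      have hnone := hN (N + j + 1) (by omega)
      rw [hornSimSeq_succ] at hnone
      rw [← Nat.add_assoc, hornSimSeq_succ,
        hornStep_fst_of_snd_eq_none (hN _ (by omega)) hnone, List.length_append, ih]
      rfl
  have hlast (n : ℕ) (hn : N ≤ n) : (hornSimSeq G W w s ρ n).1.getLast? = some (ρ n) := by
    rw [← getLast?_prefixUpTo]
    exact getLast?_of_hornSim_eq_none (Prod.ext rfl (hN n hn))
  have hpos : 0 < (hornSimSeq G W w s ρ N).1.length :=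
    List.length_pos_iff.mpr fun h => by simpa [h] using hlast N le_rfl
  have hshift : (fun j => ρ' ((hornSimSeq G W w s ρ N).1.length - 1 + j)) =
      fun j => ρ (N + j) := by
    funext j
    have := hρ'.apply_length_sub_one (hlast (N + j) (by omega))
    rwa [hlen, Nat.sub_add_comm hpos] at this
  rw [← infSet_shift ρ N, ← hshift, infSet_shift]

theorem mem_infSet_of_frequently_ne_none
    (hρ' : IsListLimit ρ' fun n => (hornSimSeq G W w s ρ n).1)
    (hph : ∀ N, ∃ n, N ≤ n ∧ (hornSimSeq G W w s ρ n).2 ≠ none) : w ∈ InfSet ρ' := by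
  intro M
  obtain ⟨n₀, hn₀⟩ := hρ'.2 M
  obtain ⟨n, hn, hne⟩ := hph n₀
  obtain ⟨p, hp⟩ := Option.ne_none_iff_exists'.mp hne
  refine ⟨_, ?_, hρ'.apply_length_sub_one (getLast?_of_hornSim_eq_some (Prod.ext rfl hp))⟩
  have := hn₀.trans_le (hornSimSeq_fst_isPrefix hn).length_le
  omega

theorem infSet_eq_of_infSet_limit_eq_union
    (hρ' : IsListLimit ρ' fun n => (hornSimSeq G W w s ρ n).1) (hρw : ∀ n, ρ n ≠ w)
    {W' : Set V} (hWW' : W ⊆ W') (hwW' : w ∉ W') (heq : InfSet ρ' = W' ∪ {w}) :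
    InfSet ρ = W' := by
  classical
  have hsim_le {v : V} (hv : v ≠ w) (hv' : v ∈ InfSet ρ') : v ∈ InfSet ρ := by
    rw [hρ'.mem_infSet_iff_count] at hv'
    refine mem_infSet_iff_count.mpr fun m => ?_
    obtain ⟨n, hn⟩ := hv' m
    exact ⟨n, hn.trans (count_hornSim_fst_le hv _)⟩
  have hle_sim {v : V} (hvW : v ∉ W) (hv : v ∈ InfSet ρ) : v ∈ InfSet ρ' := by
    rw [hρ'.mem_infSet_iff_count]
    intro m
    obtain ⟨n, hn⟩ := mem_infSet_iff_count.mp hv m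
    exact ⟨n, hn.trans (count_le_count_hornSim_fst hvW _)⟩
  ext v
  refine ⟨fun hv => ?_, fun hv => hsim_le (ne_of_mem_of_not_mem hv hwW') (heq ▸ Or.inl hv)⟩
  have hvw : v ≠ w := by
    obtain ⟨n, -, rfl⟩ := hv 0
    exact hρw n
  by_cases hvW : v ∈ W
  · exact hWW' hvW
  · simpa [heq, hvw] using hle_sim hvW hv

end Along

section Strategy

variable (G : MullerGame V) (W : Set V) (w : V) (s : List V → V) (sc : V → List V → V)

noncomputable def hornStrategy (h : List V) : V :=
  match hornSim G W w s h with
  | (sh, none) => s sh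
  | (_, some (a, k)) => sc a (h.drop k)

variable {G W w s sc} {v0 v a : V} {l sh : List V} {k N : ℕ} {ρ : ℕ → V}

theorem hornStrategy_of_none (hst : hornSim G W w s l = (sh, none)) :
    hornStrategy G W w s sc l = s sh := by
  simp [hornStrategy, hst]

theorem hornStrategy_of_some (hst : hornSim G W w s l = (sh, some (a, k))) :
    hornStrategy G W w s sc l = sc a (l.drop k) := by
  simp [hornStrategy, hst]

theorem getLast?_drop_and_mem {σ : Bool} {t : List V → V} (ha : a ∈ W)
    (hph : HistM (connGameOn G W) σ t a (l.drop k)) (hv : l.getLast? = some v) :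
    (l.drop k).getLast? = some v ∧ v ∈ W := by
  have hk : ¬ l.length ≤ k := by simpa using hph.ne_nil
  have hv' : (l.drop k).getLast? = some v := by rw [List.getLast?_drop, if_neg hk, hv]
  exact ⟨hv', hph.forall_mem_connGameOn ha v (List.mem_of_getLast? hv')⟩

theorem hornStrategy_mem_connGameOn_E (hst : hornSim G W w s l = (sh, some (a, k)))
    (ha : a ∈ W) (hsc : WinsFrom (connGameOn G W) false (sc a) a)
    (hph : HistM (connGameOn G W) false (sc a) a (l.drop k)) (hv : l.getLast? = some v)
    (hvV0 : v ∈ G.V0) : (v, hornStrategy G W w s sc l) ∈ (connGameOn G W).E := by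
  obtain ⟨hv', hvW⟩ := getLast?_drop_and_mem ha hph hv
  rw [hornStrategy_of_some hst]
  exact hsc.move_mem_E hph hv' ⟨hvV0, hvW⟩

theorem HistM.hornStep_fst_of_none {u : V} (hl : HistM (horn G W w) false s v0 (sh ++ [u])) :
    HistM (horn G W w) false s v0 (hornStep G W w s (sh, none) u k).1 := by
  simp only [hornStep]
  split_ifs with h
  · exact hl.snoc (by simp) (Or.inl (Or.inr ⟨⟨h.1, h.2.1⟩, rfl⟩))
      (Or.inl ⟨h.1, h.2.2.symm⟩)
  · exact hl

variable (hsc : ∀ a ∈ W, WinsFrom (connGameOn G W) false (sc a) a)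
include hsc

theorem histM_connGameOn_of_hornSim_eq_some
    (hl : HistM G false (hornStrategy G W w s sc) v0 l)
    (hst : hornSim G W w s l = (sh, some (a, k))) :
    a ∈ W ∧ HistM (connGameOn G W) false (sc a) a (l.drop k) := by
  refine hl.induction_snoc (P := fun l => ∀ sh a k, hornSim G W w s l = (sh, some (a, k)) →
    a ∈ W ∧ HistM (connGameOn G W) false (sc a) a (l.drop k)) ?_ ?_ sh a k hst
  · intro sh a k hst
    rw [← List.nil_append [v0], hornSim_append_singleton] at hst
    rcases hornStep_eq_some hst with ⟨-, ha, rfl, rfl⟩ | ⟨-, hst⟩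
    · exact ⟨ha, .base⟩
    · cases hst
  intro l v u hl hv ih he hmove sh a k hst
  rw [hornSim_append_singleton] at hst
  rcases hornStep_eq_some hst with ⟨-, ha, rfl, rfl⟩ | ⟨huW, hprev⟩
  · exact ⟨ha, by simpa using HistM.base⟩
  obtain ⟨ha, hph⟩ := ih sh a k hprev
  obtain ⟨hv', hvW⟩ := getLast?_drop_and_mem ha hph hv
  have hk : k < l.length := by simpa using hph.ne_nil
  refine ⟨ha, ?_⟩
  rw [List.drop_append_of_le_length hk.le]
  rcases hmove with ⟨hvV0, rfl⟩ | hvV1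
  · have he' := hornStrategy_mem_connGameOn_E hprev ha (hsc a ha) hph hv hvV0
    rw [hornStrategy_of_some hprev] at he' ⊢
    exact hph.snoc hv' he' (Or.inl ⟨⟨hvV0, hvW⟩, rfl⟩)
  · exact hph.snoc hv' ⟨he, hvW, huW⟩ (Or.inr ⟨hvV1, hvW⟩)

theorem histM_horn_hornSim_fst (hl : HistM G false (hornStrategy G W w s sc) v0 l) :
    HistM (horn G W w) false s v0 (hornSim G W w s l).1 := by
  refine hl.induction_snoc (P := fun l => HistM (horn G W w) false s v0 (hornSim G W w s l).1)
    ?_ ?_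
  · rw [← List.nil_append [v0], hornSim_append_singleton]
    exact HistM.base.hornStep_fst_of_none
  intro l v u hl hv ih he hmove
  rw [hornSim_append_singleton]
  rcases hst : hornSim G W w s l with ⟨sh, _ | ⟨a, k⟩⟩ <;> rw [hst] at ih
  · have hsh : sh.getLast? = some v := (getLast?_of_hornSim_eq_none hst).trans hv
    refine (ih.snoc hsh (Or.inl (Or.inl he)) ?_).hornStep_fst_of_none
    rw [← hornStrategy_of_none (sc := sc) hst]
    exact hmove.imp_right Or.inl
  · simp only [hornStep]
    split_ifs with huW
    · exact ih
    obtain ⟨ha, hph⟩ := histM_connGameOn_of_hornSim_eq_some hsc hl hst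
    have hvW := (getLast?_drop_and_mem ha hph hv).2
    have hvV1 : v ∈ G.V1 := by
      rcases hmove with ⟨hvV0, rfl⟩ | hvV1
      · exact absurd (hornStrategy_mem_connGameOn_E hst ha (hsc a ha) hph hv hvV0).2.2 huW
      · exact hvV1
    exact ih.snoc (getLast?_of_hornSim_eq_some hst)
      (Or.inr ⟨rfl, ⟨v, ⟨hvV1, hvW⟩, he⟩, huW⟩) (Or.inr (Or.inr rfl))

theorem hornStrategy_move_mem_E
    (hs : WinsFrom (horn G W w) false s v0) (hw : w ∉ G.verts)
    (hl : HistM G false (hornStrategy G W w s sc) v0 l) (hv : l.getLast? = some v)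
    (hvV0 : v ∈ G.V0) : (v, hornStrategy G W w s sc l) ∈ G.E := by
  rcases hst : hornSim G W w s l with ⟨sh, _ | ⟨a, k⟩⟩
  · have hsh : sh.getLast? = some v := (getLast?_of_hornSim_eq_none hst).trans hv
    have hshist : HistM (horn G W w) false s v0 sh := by
      simpa [hst] using histM_horn_hornSim_fst hsc hl
    have hmove := hs.move_mem_E hshist hsh hvV0
    rw [hornStrategy_of_none hst]
    rcases hmove with (he | ⟨⟨-, hvW⟩, hsw⟩) | ⟨rfl, -⟩
    · exact he
    · exact absurd hsw (apply_ne_of_hornSim_eq_none hst hv hvV0 hvW)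
    · exact absurd (Or.inl hvV0) hw
  · obtain ⟨ha, hph⟩ := histM_connGameOn_of_hornSim_eq_some hsc hl hst
    exact (hornStrategy_mem_connGameOn_E hst ha (hsc a ha) hph hv hvV0).1

theorem hornStrategy_exists_edge
    (hs : WinsFrom (horn G W w) false s v0) (hw : w ∉ G.verts)
    (hEV : ∀ e ∈ G.E, e.2 ∈ G.verts) (hv0 : v0 ∈ G.verts)
    (hl : HistM G false (hornStrategy G W w s sc) v0 l) (hv : l.getLast? = some v) :
    ∃ u, (v, u) ∈ G.E := by
  rcases hst : hornSim G W w s l with ⟨sh, _ | ⟨a, k⟩⟩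
  · have hsh : sh.getLast? = some v := (getLast?_of_hornSim_eq_none hst).trans hv
    have hshist : HistM (horn G W w) false s v0 sh := by
      simpa [hst] using histM_horn_hornSim_fst hsc hl
    obtain ⟨u, hu⟩ := hs.exists_edge hshist hsh
    rcases hu with (he | ⟨⟨-, hvW⟩, -⟩) | ⟨rfl, -⟩
    · exact ⟨u, he⟩
    · obtain ⟨u, hu⟩ := (hsc v hvW).exists_edge .base rfl
      exact ⟨u, hu.1⟩
    · exact absurd (hl.forall_mem hv0 hEV _ (List.mem_of_getLast? hv)) hw
  · obtain ⟨ha, hph⟩ := histM_connGameOn_of_hornSim_eq_some hsc hl hst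
    obtain ⟨u, hu⟩ := (hsc a ha).exists_edge hph (getLast?_drop_and_mem ha hph hv).1
    exact ⟨u, hu.1⟩

theorem infSet_eq_of_eventually_ne_none
    (hWV : W ⊆ G.verts) (hρ : InfPlayM G false (hornStrategy G W w s sc) v0 ρ)
    (hN : ∀ n, N ≤ n → (hornSimSeq G W w s ρ n).2 ≠ none) : InfSet ρ = W := by
  have hconst : ∀ j, hornSimSeq G W w s ρ (N + j) = hornSimSeq G W w s ρ N := by
    intro j
    induction j with
    | zero => rfl
    | succ j ih =>
      rw [← Nat.add_assoc, hornSimSeq_succ, ← ih]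
      refine (hornStep_eq_or_snd_eq_none (hN _ (by omega))).resolve_right ?_
      rw [← hornSimSeq_succ]
      exact hN _ (by omega)
  obtain ⟨sh, a, k, hst⟩ : ∃ sh a k, hornSimSeq G W w s ρ N = (sh, some (a, k)) := by
    rcases h : hornSimSeq G W w s ρ N with ⟨sh, _ | ⟨a, k⟩⟩
    · exact absurd (congrArg Prod.snd h) (hN N le_rfl)
    · exact ⟨sh, a, k, rfl⟩
  have hphase (j : ℕ) :=
    histM_connGameOn_of_hornSim_eq_some hsc (hρ (N + j)) ((hconst j).trans hst)
  have hk : k ≤ N := by simpa [Nat.lt_succ_iff] using (hphase 0).2.ne_nil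
  have hplay : InfPlayM (connGameOn G W) false (sc a) a (fun j => ρ (k + j)) :=
    InfPlayM.of_forall_exists_le fun j =>
      ⟨N + j - k, by omega, by rw [← drop_prefixUpTo (by omega)]; exact (hphase j).2⟩
  have hinf := (hsc a (hphase 0).1).infSet_mem hplay
  rw [infSet_shift] at hinf
  rw [Set.mem_singleton_iff.mp hinf, ← Set.union_inter_distrib_right]
  exact Set.inter_eq_right.mpr hWV

theorem hornStrategy_infSet_mem
    (hs : WinsFrom (horn G W w) false s v0) (hOm : ∀ W' ∈ G.Omega, W' ⊆ G.verts)
    (hW : W ∈ G.Omega) (hw : w ∉ G.verts) (hEV : ∀ e ∈ G.E, e.2 ∈ G.verts)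
    (hv0 : v0 ∈ G.verts) (hρ : InfPlayM G false (hornStrategy G W w s sc) v0 ρ) :
    InfSet ρ ∈ G.Omega := by
  have hρw (n : ℕ) : ρ n ≠ w := fun h =>
    hw (h ▸ (hρ n).forall_mem hv0 hEV _ (List.mem_of_getLast? getLast?_prefixUpTo))
  by_cases hA : ∃ N, ∀ n, N ≤ n → (hornSimSeq G W w s ρ n).2 ≠ none
  · obtain ⟨N, hN⟩ := hA
    rwa [infSet_eq_of_eventually_ne_none hsc (hOm W hW) hρ hN]
  push Not at hA
  obtain ⟨ρ', hρ'⟩ := exists_isListLimit (fun n => hornSimSeq_fst_isPrefix (Nat.le_succ n))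
    (exists_lt_length_hornSimSeq hA)
  have hΩ := hs.infSet_mem (hρ'.infPlayM fun n => histM_horn_hornSim_fst hsc (hρ n))
  by_cases hB : ∃ N, ∀ n, N ≤ n → (hornSimSeq G W w s ρ n).2 = none
  · obtain ⟨N, hN⟩ := hB
    have hwρ : w ∉ InfSet ρ := fun h => by
      obtain ⟨n, -, hn⟩ := h 0
      exact hρw n hn
    rw [infSet_eq_of_eventually_eq_none hρ' hN] at hwρ ⊢
    exact mem_omega_of_mem_horn_omega hΩ hwρ
  · push Not at hB
    obtain ⟨W', hW', hWW', heq⟩ :=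
      exists_eq_union_of_mem_horn_omega hOm hw hΩ (mem_infSet_of_frequently_ne_none hρ' hB)
    rwa [infSet_eq_of_infSet_limit_eq_union hρ' hρw hWW' (fun h => hw (hOm W' hW' h)) heq]

theorem hornStrategy_winsFrom
    (hs : WinsFrom (horn G W w) false s v0) (hOm : ∀ W' ∈ G.Omega, W' ⊆ G.verts)
    (hW : W ∈ G.Omega) (hw : w ∉ G.verts) (hEV : ∀ e ∈ G.E, e.2 ∈ G.verts)
    (hv0 : v0 ∈ G.verts) : WinsFrom G false (hornStrategy G W w s sc) v0 :=
  ⟨fun _ _ hl hvV0 _ => hornStrategy_move_mem_E hsc hs hw hl (by simp) hvV0,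
    fun _ _ hl => hornStrategy_exists_edge hsc hs hw hEV hv0 hl (by simp),
    fun _ hρ => hornStrategy_infSet_mem hsc hs hOm hW hw hEV hv0 hρ⟩

end Strategy

theorem stmt14_general (G : MullerGame V) (W : Set V) (w : V)
    (hEsub : G.E ⊆ (G.V0 ×ˢ G.V1) ∪ (G.V1 ×ˢ G.V0))
    (hOm : ∀ W' ∈ G.Omega, W' ⊆ G.verts)
    (hW : W ∈ G.Omega)
    (hfc : ForcedConnectedOn G W)
    (hw : w ∉ G.verts) :
    WinSet (horn G W w) false \ {w} ⊆ WinSet G false := by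
  rintro v0 ⟨⟨hv0, s, hs⟩, hv0w⟩
  have hv0G : v0 ∈ G.verts := by
    rcases hv0 with h | h | h
    exacts [Or.inl h, Or.inr h, absurd h hv0w]
  have hEV : ∀ e ∈ G.E, e.2 ∈ G.verts := fun e he =>
    (hEsub he).elim (fun h => Or.inr h.2) (fun h => Or.inl h.2)
  obtain ⟨sc, hsc⟩ := hfc.exists_strategy (hOm W hW)
  exact ⟨hv0G, _, hornStrategy_winsFrom hsc hs hOm hW hw hEV hv0G⟩

/-- If `W ∈ Ω`, the arena of `G(W)` is forced-connected, `W` is not a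
1-trap in `G`, and `w ∉ V` is the fresh player-1 vertex `𝐖` of Horn's construction
`G_W`, then `Win_0(G_W) \ {𝐖} ⊆ Win_0(G)`. -/
theorem stmt14 [Fintype V] (G : MullerGame V) (W : Set V) (w : V)
    (hdisj : Disjoint G.V0 G.V1)
    (hEsub : G.E ⊆ (G.V0 ×ˢ G.V1) ∪ (G.V1 ×ˢ G.V0))
    (hOm : ∀ W' ∈ G.Omega, W' ⊆ G.verts)
    (hW : W ∈ G.Omega)
    (hfc : ForcedConnectedOn G W)
    (hnt : ¬ IsTrap G true W)
    (hw : w ∉ G.verts) :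
    WinSet (horn G W w) false \ {w} ⊆ WinSet G false :=
  stmt14_general G W w hEsub hOm hW hfc hw

end Games
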